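/- Let $a\in(-1,1)$, $\nu=(a-1)/2$, and for $x,y\in\mathbb{R}$, $t>0$ define $\widetilde u(x,y,t)=(4t)^{-(a+1)/2}e^{-(x-y)^2/(4t)}\Big(e^{-xy/(2t)}\sum_{k\ge0}\frac{(xy/(4t))^{2k}}{k!\,\Gamma(k+\nu+1)}+\frac{xy}{4t}\big|\frac{xy}{4t}\big|^{-a}e^{-xy/(2t)}\sum_{k\ge0}\frac{(xy/(4t))^{2k}}{k!\,\Gamma(k-\nu+1)}\Big)$. Then for every $x\in\mathbb{R}$, every $y\neq 0$, and every $t>0$, $\widetilde u$ satisfies $\partial_t \widetilde u - \partial_{yy}\widetilde u - \frac{a}{y}\partial_y \widetilde u = 0$. -/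

import Mathlib

noncomputable section
open Real

/-- The Bessel-type profile `F(z)` with `ν = (a-1)/2`:
`F(z) = e^{-z/2} ( ∑_k (z/4)^{2k}/(k! Γ(k+ν+1)) + (z/4)|z/4|^{-a} ∑_k (z/4)^{2k}/(k! Γ(k-ν+1)) )`. -/
def Fker (a z : ℝ) : ℝ :=
  Real.exp (-z / 2) *
    ((∑' k : ℕ, (z / 4) ^ (2 * k) / ((Nat.factorial k : ℝ) * Real.Gamma ((k : ℝ) + (a - 1) / 2 + 1))) +
      z / 4 * |z / 4| ^ (-a) *
        ∑' k : ℕ, (z / 4) ^ (2 * k) / ((Nat.factorial k : ℝ) * Real.Gamma ((k : ℝ) - (a - 1) / 2 + 1)))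

/-- The one-dimensional degenerate heat kernel
`ũ(x,y,t) = (4t)^{-(a+1)/2} e^{-(x-y)²/(4t)} F(xy/t)`. -/
def utilde (a x y t : ℝ) : ℝ :=
  (4 * t) ^ (-(a + 1) / 2) * Real.exp (-(x - y) ^ 2 / (4 * t)) * Fker a (x * y / t)

/-!
The profile `F = Fker a` solves the confluent equation `z F'' + (z + a) F' + (a / 2) F = 0` on
`z ≠ 0`. Writing `F = e^{-z/2} Φ` turns it into `z Φ'' + a Φ' = (z / 4) Φ`, and `Φ` is the sum of
`g_ν((z/4)²)` and `(z/4) |z/4|^{-a} g_{-ν}((z/4)²)`, where `g_μ(u) = ∑ uᵏ / (k! Γ(k + μ + 1))`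
satisfies `u g'' + (μ + 1) g' = g` because `Γ(s + 1) = s Γ(s)`; the factor `(z/4) |z/4|^{-a}`
intertwines the equations with parameters `2 - a` and `a`.

For an arbitrary profile `F`, differentiating `(4t)^{-(a+1)/2} e^{-(x-y)²/(4t)} F(xy/t)` shows that
its residual `∂ₜ - ∂_yy - (a/y) ∂_y` is `-x / (y t)` times the Gaussian factor times the residual
of the confluent equation at `z = xy/t`.
-/
open Filter Topology Metric

theorem iteratedDeriv_two_eq_of_hasDerivAt {𝕜 F : Type*} [NontriviallyNormedField 𝕜]
    [NormedAddCommGroup F] [NormedSpace 𝕜 F] {f f' : 𝕜 → F} {x : 𝕜} {f'' : F}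
    (h : ∀ᶠ y in 𝓝 x, HasDerivAt f (f' y) y) (h' : HasDerivAt f' f'' x) :
    iteratedDeriv 2 f x = f'' := by
  rw [iteratedDeriv_succ, iteratedDeriv_one]
  exact (h'.congr_of_eventuallyEq (h.mono fun y hy => hy.deriv)).deriv

theorem hasDerivAt_abs_rpow_of_ne_zero (p : ℝ) {w : ℝ} (hw : w ≠ 0) :
    HasDerivAt (fun w => |w| ^ p) (p * |w| ^ p / w) w := by
  refine ((hasDerivAt_abs hw).rpow_const (Or.inl (abs_ne_zero.mpr hw))).congr_deriv ?_
  rw [rpow_sub_one (abs_ne_zero.mpr hw)]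
  rcases hw.lt_or_gt with hw | hw
  · rw [abs_of_neg hw, sign_neg hw]
    field_simp
    simp
  · rw [abs_of_pos hw, sign_pos hw]
    field_simp
    simp

theorem hasDerivAt_mul_abs_rpow (p : ℝ) {w : ℝ} (hw : w ≠ 0) :
    HasDerivAt (fun w => w * |w| ^ p) ((p + 1) * |w| ^ p) w := by
  refine ((hasDerivAt_id' w).mul (hasDerivAt_abs_rpow_of_ne_zero p hw)).congr_deriv ?_
  field_simp
  ring

theorem contDiffAt_mul_abs_rpow (n : ℕ) (p : ℝ) {w : ℝ} (hw : w ≠ 0) :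
    ContDiffAt ℝ n (fun w => w * |w| ^ p) w :=
  contDiffAt_id.mul ((contDiffAt_abs hw).rpow_const_of_ne (abs_ne_zero.mpr hw))

theorem iteratedDeriv_two_mul {𝕜 : Type*} [NontriviallyNormedField 𝕜] {f g : 𝕜 → 𝕜} {x : 𝕜}
    (hf : ContDiffAt 𝕜 2 f x) (hg : ContDiffAt 𝕜 2 g x) :
    iteratedDeriv 2 (fun y => f y * g y) x =
      iteratedDeriv 2 f x * g x + 2 * deriv f x * deriv g x + f x * iteratedDeriv 2 g x := by
  rw [← Pi.mul_def, iteratedDeriv_mul hf hg]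
  simp [Finset.sum_range_succ]
  ring

def powerSum (c : ℕ → ℝ) (u : ℝ) : ℝ := ∑' k, c k * u ^ k

def derivCoeff (c : ℕ → ℝ) (k : ℕ) : ℝ := (k + 1) * c (k + 1)

section PowerSum

variable {c : ℕ → ℝ}

theorem summable_mul_pow (hc : ∀ R, Summable fun k => |c k| * R ^ k) (u : ℝ) :
    Summable fun k => c k * u ^ k :=
  .of_norm <| by simpa [abs_mul] using hc |u|

theorem summable_abs_derivCoeff_mul_pow (hc : ∀ R, Summable fun k => |c k| * R ^ k) (R : ℝ) :
    Summable fun k => |derivCoeff c k| * R ^ k := by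
  refine .of_norm_bounded ((summable_nat_add_iff 1).mpr (hc (2 * (|R| + 1)))) fun k => ?_
  have hk : ((k : ℝ) + 1) ≤ 2 ^ (k + 1) := by
    exact_mod_cast (Nat.lt_two_pow_self (n := k + 1)).le
  have hR : |R| ^ k ≤ (|R| + 1) ^ (k + 1) :=
    (pow_le_pow_left₀ (abs_nonneg R) (by linarith) k).trans
      (pow_le_pow_right₀ (by linarith [abs_nonneg R]) k.le_succ)
  rw [derivCoeff, norm_mul, Real.norm_eq_abs, abs_abs, abs_mul, norm_pow, Real.norm_eq_abs,
    abs_of_nonneg (by positivity : (0 : ℝ) ≤ k + 1), mul_pow]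
  calc (k + 1) * |c (k + 1)| * |R| ^ k = |c (k + 1)| * ((k + 1) * |R| ^ k) := by ring
    _ ≤ |c (k + 1)| * (2 ^ (k + 1) * (|R| + 1) ^ (k + 1)) := by gcongr

theorem hasDerivAt_powerSum (hc : ∀ R, Summable fun k => |c k| * R ^ k) (u : ℝ) :
    HasDerivAt (powerSum c) (powerSum (derivCoeff c) u) u := by
  set R := |u| + 1
  have hbound : Summable fun k => |c k| * k * R ^ (k - 1) := by
    refine (summable_nat_add_iff 1).mp ((summable_abs_derivCoeff_mul_pow hc R).congr fun k => ?_)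
    rw [derivCoeff, abs_mul, abs_of_nonneg (by positivity : (0 : ℝ) ≤ k + 1), Nat.add_sub_cancel]
    push_cast
    ring
  have hle : ∀ k, ∀ w ∈ ball (0 : ℝ) R, ‖c k * (k * w ^ (k - 1))‖ ≤ |c k| * k * R ^ (k - 1) := by
    intro k w hw
    have hw : |w| ≤ R := by simpa using (mem_ball.mp hw).le
    rw [norm_mul, norm_mul, norm_pow, Real.norm_eq_abs, Real.norm_eq_abs, Real.norm_eq_abs,
      Nat.abs_cast, mul_assoc]
    gcongr
  have hu : u ∈ ball (0 : ℝ) R := by simp [R]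
  have hderiv := hasDerivAt_tsum_of_isPreconnected hbound isOpen_ball
    (convex_ball (0 : ℝ) R).isPreconnected (fun k w _ => (hasDerivAt_pow k w).const_mul (c k))
    hle (mem_ball_self (by positivity)) (summable_mul_pow hc 0) hu
  refine hderiv.congr_deriv ?_
  rw [(hbound.of_norm_bounded (hle · u hu)).tsum_eq_zero_add, powerSum]
  simp [derivCoeff, mul_comm, mul_left_comm]

theorem deriv_powerSum (hc : ∀ R, Summable fun k => |c k| * R ^ k) :
    deriv (powerSum c) = powerSum (derivCoeff c) :=
  funext fun u => (hasDerivAt_powerSum hc u).deriv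

theorem contDiff_powerSum (hc : ∀ R, Summable fun k => |c k| * R ^ k) (n : ℕ) :
    ContDiff ℝ n (powerSum c) := by
  induction n generalizing c with
  | zero => exact contDiff_zero.mpr <| continuous_iff_continuousAt.mpr fun u =>
      (hasDerivAt_powerSum hc u).continuousAt
  | succ n ih =>
    rw [Nat.cast_succ, contDiff_succ_iff_deriv, deriv_powerSum hc]
    exact ⟨fun u => (hasDerivAt_powerSum hc u).differentiableAt, by simp,
      ih (summable_abs_derivCoeff_mul_pow hc)⟩

theorem mul_powerSum_derivCoeff (hc : ∀ R, Summable fun k => |c k| * R ^ k) (u : ℝ) :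
    u * powerSum (derivCoeff c) u = powerSum (fun k => k * c k) u := by
  have hshift : (fun k => u * (derivCoeff c k * u ^ k)) =
      fun k => ((k + 1 : ℕ) : ℝ) * c (k + 1) * u ^ (k + 1) := by
    funext k
    rw [derivCoeff]
    push_cast
    ring
  rw [powerSum, powerSum, ← tsum_mul_left, hshift, tsum_eq_zero_add' (f := fun k => k * c k * u ^ k)]
  · simp
  · rw [← hshift]
    exact (summable_mul_pow (summable_abs_derivCoeff_mul_pow hc) u).mul_left u

end PowerSum

/-- `powerSum (besselCoeff μ) u = u ^ (-μ / 2) * I_μ (2 * √u)` for `u > 0`, with `I_μ` the modified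
Bessel function. -/
def besselCoeff (μ : ℝ) (k : ℕ) : ℝ := ((k.factorial : ℝ) * Gamma (k + μ + 1))⁻¹

section BesselCoeff

variable {μ : ℝ}

theorem besselCoeff_pos (hμ : -1 < μ) (k : ℕ) : 0 < besselCoeff μ k := by
  have hΓ : 0 < Gamma (k + μ + 1) := Gamma_pos_of_pos (by linarith [k.cast_nonneg (α := ℝ)])
  unfold besselCoeff
  positivity

theorem besselCoeff_eq_mul_succ (hμ : -1 < μ) (k : ℕ) :
    besselCoeff μ k = (k + 1) * (k + μ + 1) * besselCoeff μ (k + 1) := by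
  have hpos : (k : ℝ) + μ + 1 ≠ 0 := by linarith [k.cast_nonneg (α := ℝ)]
  have hΓ := (Gamma_pos_of_pos (by linarith [k.cast_nonneg (α := ℝ)] : 0 < (k : ℝ) + μ + 1)).ne'
  rw [besselCoeff, besselCoeff, Nat.factorial_succ, Nat.cast_add_one,
    show (k : ℝ) + 1 + μ + 1 = (k + μ + 1) + 1 by ring, Gamma_add_one hpos]
  push_cast
  field_simp

theorem summable_abs_besselCoeff_mul_pow (hμ : -1 < μ) (R : ℝ) :
    Summable fun k => |besselCoeff μ k| * R ^ k := by
  refine summable_of_ratio_norm_eventually_le (r := 1 / 2) (by norm_num) ?_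
  filter_upwards [eventually_ge_atTop ⌈2 * |R|⌉₊] with k hk
  have hk : 2 * |R| ≤ k := Nat.ceil_le.mp hk
  have hc := besselCoeff_pos hμ (k + 1)
  have hM : 2 * |R| ≤ (k + 1) * (k + μ + 1) := by nlinarith
  have hR : 0 ≤ besselCoeff μ (k + 1) * |R| ^ k := by positivity
  suffices besselCoeff μ (k + 1) * |R| ^ (k + 1) ≤ 1 / 2 * (besselCoeff μ k * |R| ^ k) by
    simpa [abs_of_pos hc, abs_of_pos (besselCoeff_pos hμ k)] using this
  rw [besselCoeff_eq_mul_succ hμ k, pow_succ]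
  nlinarith

end BesselCoeff

theorem powerSum_besselCoeff_ode {μ : ℝ} (hμ : -1 < μ) (u : ℝ) :
    u * iteratedDeriv 2 (powerSum (besselCoeff μ)) u + (μ + 1) * deriv (powerSum (besselCoeff μ)) u
      = powerSum (besselCoeff μ) u := by
  have hc := summable_abs_besselCoeff_mul_pow hμ
  have hdc := summable_abs_derivCoeff_mul_pow hc
  rw [iteratedDeriv_succ, iteratedDeriv_one, deriv_powerSum hc, deriv_powerSum hdc,
    ← eq_sub_iff_add_eq, mul_powerSum_derivCoeff hdc, powerSum, powerSum, powerSum, ← tsum_mul_left,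
    ← (summable_mul_pow hc u).tsum_sub ((summable_mul_pow hdc u).mul_left _)]
  refine tsum_congr fun k => ?_
  rw [besselCoeff_eq_mul_succ hμ k, derivCoeff]
  ring

theorem powerSum_besselCoeff_sq_ode {μ : ℝ} (hμ : -1 < μ) (z : ℝ) :
    z * iteratedDeriv 2 (fun z => powerSum (besselCoeff μ) ((z / 4) ^ 2)) z
      + (2 * μ + 1) * deriv (fun z => powerSum (besselCoeff μ) ((z / 4) ^ 2)) z
      = z / 4 * powerSum (besselCoeff μ) ((z / 4) ^ 2) := by
  have hg := contDiff_powerSum (summable_abs_besselCoeff_mul_pow hμ) 2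
  have hq (y : ℝ) : HasDerivAt (fun z : ℝ => (z / 4) ^ 2) (y / 8) y := by
    refine (((hasDerivAt_id' y).div_const 4).fun_pow 2).congr_deriv ?_
    ring
  have hq' : HasDerivAt (fun y : ℝ => y / 8) (1 / 8) z := by
    simpa using (hasDerivAt_id z).div_const 8
  have h2 := iteratedDeriv_comp_two (g := powerSum (besselCoeff μ)) (f := fun z => (z / 4) ^ 2)
    (x := z) hg.contDiffAt (by fun_prop)
  have h1 := ((hg.differentiable (by norm_num) _).hasDerivAt.comp z (hq z)).deriv
  rw [Function.comp_def, iteratedDeriv_two_eq_of_hasDerivAt (.of_forall hq) hq', (hq z).deriv] at h2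
  rw [Function.comp_def] at h1
  rw [h2, h1, ← powerSum_besselCoeff_ode hμ]
  ring

theorem contDiff_powerSum_besselCoeff_comp_sq {μ : ℝ} (hμ : -1 < μ) :
    ContDiff ℝ 2 (fun z => powerSum (besselCoeff μ) ((z / 4) ^ 2)) :=
  (contDiff_powerSum (summable_abs_besselCoeff_mul_pow hμ) 2).comp (by fun_prop)

theorem ode_mul_abs_rpow {a z : ℝ} {H : ℝ → ℝ} (hz : z ≠ 0) (hH : ContDiffAt ℝ 2 H z) :
    z * iteratedDeriv 2 (fun w => w / 4 * |w / 4| ^ (-a) * H w) z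
        + a * deriv (fun w => w / 4 * |w / 4| ^ (-a) * H w) z
        - z / 4 * (z / 4 * |z / 4| ^ (-a) * H z)
      = z / 4 * |z / 4| ^ (-a) *
          (z * iteratedDeriv 2 H z + (2 - a) * deriv H z - z / 4 * H z) := by
  have hz4 : z / 4 ≠ 0 := by positivity
  have hs (w : ℝ) (hw : w ≠ 0) :
      HasDerivAt (fun w => w / 4 * |w / 4| ^ (-a)) ((1 - a) / 4 * |w / 4| ^ (-a)) w := by
    refine ((hasDerivAt_mul_abs_rpow (-a) (by positivity)).comp w
      ((hasDerivAt_id' w).div_const 4)).congr_deriv ?_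
    ring
  have hs' : HasDerivAt (fun w => (1 - a) / 4 * |w / 4| ^ (-a))
      ((1 - a) / 4 * (-a * |z / 4| ^ (-a) / (z / 4) * (1 / 4))) z :=
    ((hasDerivAt_abs_rpow_of_ne_zero (-a) hz4).comp z ((hasDerivAt_id' z).div_const 4)).const_mul _
  have hs2 := iteratedDeriv_two_eq_of_hasDerivAt ((eventually_ne_nhds hz).mono hs) hs'
  have hsC : ContDiffAt ℝ 2 (fun w => w / 4 * |w / 4| ^ (-a)) z :=
    (contDiffAt_mul_abs_rpow 2 (-a) hz4).comp z (contDiffAt_id.div_const 4)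
  rw [iteratedDeriv_two_mul hsC hH, deriv_fun_mul (hs z hz).differentiableAt
    (hH.differentiableAt (by norm_num)), hs2, (hs z hz).deriv]
  field_simp
  ring

theorem ode_exp_mul {a z : ℝ} {Φ : ℝ → ℝ} (hΦ : ContDiffAt ℝ 2 Φ z) :
    z * iteratedDeriv 2 (fun w => exp (-w / 2) * Φ w) z
        + (z + a) * deriv (fun w => exp (-w / 2) * Φ w) z + a / 2 * (exp (-z / 2) * Φ z)
      = exp (-z / 2) * (z * iteratedDeriv 2 Φ z + a * deriv Φ z - z / 4 * Φ z) := by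
  have he (w : ℝ) : HasDerivAt (fun w => exp (-w / 2)) (-exp (-w / 2) / 2) w :=
    ((hasDerivAt_id' w).fun_neg.div_const 2).exp.congr_deriv (by ring)
  have he' : HasDerivAt (fun w => -exp (-w / 2) / 2) (exp (-z / 2) / 4) z :=
    ((he z).fun_neg.div_const 2).congr_deriv (by ring)
  rw [iteratedDeriv_two_mul (by fun_prop) hΦ, deriv_fun_mul (he z).differentiableAt
    (hΦ.differentiableAt (by norm_num)), iteratedDeriv_two_eq_of_hasDerivAt (.of_forall he) he',
    (he z).deriv]
  ring

theorem Fker_eq (a : ℝ) :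
    Fker a = fun z => exp (-z / 2) * (powerSum (besselCoeff ((a - 1) / 2)) ((z / 4) ^ 2)
      + z / 4 * |z / 4| ^ (-a) * powerSum (besselCoeff (-((a - 1) / 2))) ((z / 4) ^ 2)) := by
  funext z
  simp only [Fker, powerSum, besselCoeff, ← pow_mul, div_eq_inv_mul, ← sub_eq_add_neg]

section Fker

variable {a z : ℝ}

theorem contDiffAt_abs_rpow_mul_powerSum_besselCoeff (ha₂ : a < 1) (hz : z ≠ 0) :
    ContDiffAt ℝ 2 (fun w => w / 4 * |w / 4| ^ (-a) *
      powerSum (besselCoeff (-((a - 1) / 2))) ((w / 4) ^ 2)) z :=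
  ((contDiffAt_mul_abs_rpow 2 (-a) (by positivity)).comp z (contDiffAt_id.div_const 4)).mul
    (contDiff_powerSum_besselCoeff_comp_sq (by linarith)).contDiffAt

theorem contDiffAt_Fker (ha₁ : -1 < a) (ha₂ : a < 1) (hz : z ≠ 0) : ContDiffAt ℝ 2 (Fker a) z := by
  rw [Fker_eq]
  exact (by fun_prop : ContDiff ℝ 2 fun w => exp (-w / 2)).contDiffAt.mul
    ((contDiff_powerSum_besselCoeff_comp_sq (by linarith)).contDiffAt.add
      (contDiffAt_abs_rpow_mul_powerSum_besselCoeff ha₂ hz))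

theorem Fker_ode (ha₁ : -1 < a) (ha₂ : a < 1) (hz : z ≠ 0) :
    z * iteratedDeriv 2 (Fker a) z + (z + a) * deriv (Fker a) z + a / 2 * Fker a z = 0 := by
  have hA := contDiff_powerSum_besselCoeff_comp_sq (μ := (a - 1) / 2) (by linarith)
  have hB := contDiff_powerSum_besselCoeff_comp_sq (μ := -((a - 1) / 2)) (by linarith)
  have hsB := contDiffAt_abs_rpow_mul_powerSum_besselCoeff ha₂ hz
  have hΦ := hA.contDiffAt.add hsB
  rw [Fker_eq, ode_exp_mul hΦ, iteratedDeriv_fun_add hA.contDiffAt hsB,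
    deriv_fun_add (hA.differentiable (by norm_num) z) (hsB.differentiableAt (by norm_num))]
  linear_combination exp (-z / 2) * (powerSum_besselCoeff_sq_ode (μ := (a - 1) / 2) (by linarith) z
    + ode_mul_abs_rpow hz hB.contDiffAt + z / 4 * |z / 4| ^ (-a) *
      powerSum_besselCoeff_sq_ode (μ := -((a - 1) / 2)) (by linarith) z)

end Fker

def profileKernel (a : ℝ) (F : ℝ → ℝ) (x y t : ℝ) : ℝ :=
  (4 * t) ^ (-(a + 1) / 2) * exp (-(x - y) ^ 2 / (4 * t)) * F (x * y / t)

section ProfileKernel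

variable {a x y t : ℝ} {F : ℝ → ℝ}

theorem hasDerivAt_profileKernel_time (hF : DifferentiableAt ℝ F (x * y / t)) (ht : 0 < t) :
    HasDerivAt (fun s => profileKernel a F x y s)
      ((4 * t) ^ (-(a + 1) / 2) * exp (-(x - y) ^ 2 / (4 * t)) *
        ((-(a + 1) / (2 * t) + (x - y) ^ 2 / (4 * t ^ 2)) * F (x * y / t)
          - x * y / t ^ 2 * deriv F (x * y / t))) t := by
  have h4t : 4 * t ≠ 0 := by positivity
  have hP := ((hasDerivAt_id' t).const_mul 4).rpow_const (p := -(a + 1) / 2) (Or.inl h4t)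
  have hE := ((hasDerivAt_const t (-(x - y) ^ 2)).div ((hasDerivAt_id' t).const_mul 4) h4t).exp
  have hG := hF.hasDerivAt.comp t ((hasDerivAt_inv ht.ne').const_mul (x * y))
  refine ((hP.mul hE).mul hG).congr_deriv ?_
  simp only [Pi.div_apply, Pi.mul_apply, Function.comp_apply]
  rw [rpow_sub_one h4t]
  field_simp
  ring

theorem heat_residual_profileKernel (hF : ContDiffAt ℝ 2 F (x * y / t)) (hy : y ≠ 0) (ht : 0 < t) :
    deriv (fun s => profileKernel a F x y s) t
        - iteratedDeriv 2 (fun w => profileKernel a F x w t) y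
        - a / y * deriv (fun w => profileKernel a F x w t) y
      = -(x / (y * t)) * ((4 * t) ^ (-(a + 1) / 2) * exp (-(x - y) ^ 2 / (4 * t))) *
          (x * y / t * iteratedDeriv 2 F (x * y / t) + (x * y / t + a) * deriv F (x * y / t)
            + a / 2 * F (x * y / t)) := by
  rw [(hasDerivAt_profileKernel_time (hF.differentiableAt (by norm_num)) ht).deriv]
  set C := (4 * t) ^ (-(a + 1) / 2)
  have hE (w : ℝ) : HasDerivAt (fun w => C * exp (-(x - w) ^ 2 / (4 * t)))
      (C * exp (-(x - w) ^ 2 / (4 * t)) * ((x - w) / (2 * t))) w := by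
    refine ((((hasDerivAt_id' w).const_sub x).fun_pow 2).fun_neg.div_const (4 * t)).exp.const_mul C
      |>.congr_deriv ?_
    field_simp
    ring
  have hE' : HasDerivAt (fun w => C * exp (-(x - w) ^ 2 / (4 * t)) * ((x - w) / (2 * t)))
      (C * exp (-(x - y) ^ 2 / (4 * t)) * ((x - y) ^ 2 / (4 * t ^ 2) - 1 / (2 * t))) y := by
    refine ((hE y).mul ((hasDerivAt_id' y).const_sub x |>.div_const (2 * t))).congr_deriv ?_
    field_simp
    ring
  have hL (w : ℝ) : HasDerivAt (fun w => x * w / t) (x / t) w := by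
    simpa using ((hasDerivAt_id' w).const_mul x).div_const t
  have hG2 := iteratedDeriv_comp_two (g := F) (f := fun w => x * w / t) (x := y) hF (by fun_prop)
  rw [Function.comp_def, iteratedDeriv_two_eq_of_hasDerivAt (.of_forall hL) (hasDerivAt_const y (x / t)),
    (hL y).deriv] at hG2
  have hG1 : deriv (fun w => F (x * w / t)) y = deriv F (x * y / t) * (x / t) :=
    (hF.differentiableAt (by norm_num)).hasDerivAt.comp y (hL y) |>.deriv
  have hGC : ContDiffAt ℝ 2 (fun w => F (x * w / t)) y := hF.comp y (by fun_prop)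
  change _ - iteratedDeriv 2 (fun w => C * exp (-(x - w) ^ 2 / (4 * t)) * F (x * w / t)) y
    - a / y * deriv (fun w => C * exp (-(x - w) ^ 2 / (4 * t)) * F (x * w / t)) y = _
  rw [iteratedDeriv_two_mul (by fun_prop) hGC, deriv_fun_mul (hE y).differentiableAt
    (hGC.differentiableAt (by norm_num)), iteratedDeriv_two_eq_of_hasDerivAt (.of_forall hE) hE',
    (hE y).deriv, hG2, hG1]
  field_simp
  ring

end ProfileKernel

/-- For every `x`, every `y ≠ 0` and `t > 0`, the kernel `ũ` satisfies
`∂_t ũ - ∂_{yy} ũ - (a/y) ∂_y ũ = 0`. -/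
theorem utilde_solves (a : ℝ) (ha₁ : -1 < a) (ha₂ : a < 1) (x y t : ℝ) (hy : y ≠ 0)
    (ht : 0 < t) :
    deriv (fun s => utilde a x y s) t
      - deriv (deriv (fun w => utilde a x w t)) y
      - a / y * deriv (fun w => utilde a x w t) y = 0 := by
  rcases eq_or_ne x 0 with rfl | hx
  -- `Fker a` need not be differentiable at `0`, but for `x = 0` only its value there enters.
  · have hconst : utilde a 0 = profileKernel a (fun _ => Fker a 0) 0 := by
      funext w s
      simp [utilde, profileKernel]
    have h := heat_residual_profileKernel (a := a) (x := 0) (contDiffAt_const (c := Fker a 0)) hy ht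
    rw [iteratedDeriv_succ, iteratedDeriv_one, zero_div, neg_zero, zero_mul, zero_mul] at h
    rwa [hconst]
  · have hz : x * y / t ≠ 0 := by positivity
    have h := heat_residual_profileKernel (a := a) (contDiffAt_Fker ha₁ ha₂ hz) hy ht
    rwa [iteratedDeriv_succ, iteratedDeriv_one, Fker_ode ha₁ ha₂ hz, mul_zero] at h
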